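/- For all real μ, λ and every δ ≥ 1/2, the operator H_{μ,λ}(I + G)^{−δ} extends to a bounded operator on the Bargmann space; equivalently, there exists C > 0 such that ‖H_{μ,λ} φ‖ ≤ C ‖(I + G)^δ φ‖ for all φ in the domain of (I + G)^δ. -/
import Mathlib


/-!
Formalization of statements about the Gribov operator
`H_{λ″} = λ″ a*³a³ + μ a*a + iλ a*(a + a*)a` acting on the Bargmann space `E`.

The Bargmann space is modelled abstractly: a complex Hilbert space `E` together with a
Hilbert basis `(e n)_{n : ℕ}` (corresponding to `e_n(z) = zⁿ/√n!`).  Operators are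
specified through their action on the basis / on basis coefficients, exactly as in the
paper: `G e_n = n(n-1)(n-2) e_n`,
`H_{μ,λ} e_n = iλ(n-1)√n e_{n-1} + μ n e_n + iλ n √(n+1) e_{n+1}`.
-/

noncomputable section
set_option maxHeartbeats 1000000

open Filter Topology MeasureTheory
open scoped InnerProductSpace ComplexInnerProductSpace

/-- Eigenvalues of `G = a*³a³` : `λ_n = n(n-1)(n-2)`. -/
def gEig (n : ℕ) : ℝ := (n : ℝ) * ((n : ℝ) - 1) * ((n : ℝ) - 2)

/-- Basis coefficients of `H_{μ,λ} φ`, where `φ` has basis coefficients `c`: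
`(H_{μ,λ} φ)_m = μ m c_m + iλ ( m √(m+1) c_{m+1} + (m-1) √m c_{m-1} )`
(coming from `H_{μ,λ} e_n = iλ(n-1)√n e_{n-1} + μ n e_n + iλ n √(n+1) e_{n+1}`). -/
def hCoef (μ lam : ℝ) (c : ℕ → ℂ) (m : ℕ) : ℂ :=
  (μ : ℂ) * (m : ℂ) * c m +
    Complex.I * (lam : ℂ) *
      ((m : ℂ) * (Real.sqrt (m + 1) : ℂ) * c (m + 1) +
        ((m : ℂ) - 1) * (Real.sqrt m : ℂ) * c (m - 1))

lemma gribov_gEig_nonneg (n : ℕ) : 0 ≤ gEig n := by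
  unfold gEig
  match n with
  | 0 => norm_num
  | 1 => norm_num
  | (m+2) =>
    have h : (2:ℝ) ≤ ((m+2:ℕ):ℝ) := by push_cast; linarith [Nat.cast_nonneg (α := ℝ) m]
    nlinarith [h, mul_nonneg (sub_nonneg.2 h) (sub_nonneg.2 h)]

lemma gribov_nat1 (m : ℕ) : (m:ℝ)^2 ≤ 4*(1+gEig m) := by
  unfold gEig
  match m with
  | 0 => norm_num
  | 1 => norm_num
  | (k+2) =>
    set x : ℝ := ((k+2:ℕ):ℝ) with hx
    have h2 : (2:ℝ) ≤ x := by rw [hx]; push_cast; linarith [Nat.cast_nonneg (α := ℝ) k]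
    nlinarith [sq_nonneg (x-2), sq_nonneg x, mul_nonneg (sub_nonneg.2 h2) (sq_nonneg (x-2))]

lemma gribov_nat2 (m : ℕ) : (m:ℝ)^2*((m:ℝ)+1) ≤ 2*(1+gEig (m+1)) := by
  unfold gEig
  match m with
  | 0 => norm_num
  | 1 => norm_num
  | (k+2) =>
    set x : ℝ := ((k+2:ℕ):ℝ) with hx
    have h2 : (2:ℝ) ≤ x := by rw [hx]; push_cast; linarith [Nat.cast_nonneg (α := ℝ) k]
    have hx1 : ((k+2+1:ℕ):ℝ) = x + 1 := by rw [hx]; push_cast; ring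
    rw [hx1]
    nlinarith [mul_nonneg (sub_nonneg.2 h2) (sub_nonneg.2 (show (2:ℝ) ≤ x^2 by nlinarith))]

lemma gribov_nat3 (m : ℕ) : ((m:ℝ)-1)^2*(m:ℝ) ≤ 12*(1+gEig (m-1)) := by
  unfold gEig
  match m with
  | 0 => norm_num
  | 1 => norm_num
  | 2 => norm_num
  | 3 => norm_num
  | (k+4) =>
    set x : ℝ := ((k+4:ℕ):ℝ) with hx
    have h4 : (4:ℝ) ≤ x := by rw [hx]; push_cast; linarith [Nat.cast_nonneg (α := ℝ) k]
    have hx1 : ((k+4-1:ℕ):ℝ) = x - 1 := by rw [hx]; push_cast; ring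
    rw [hx1]
    nlinarith [mul_nonneg (sub_nonneg.2 h4) (sub_nonneg.2 h4), sq_nonneg (x-4)]

lemma gribov_norm_sq_eq_tsum {E : Type} [NormedAddCommGroup E] [InnerProductSpace ℂ E]
    [CompleteSpace E] (e : HilbertBasis ℕ ℂ E) (ψ : E) :
    ‖ψ‖ ^ 2 = ∑' n, ‖e.repr ψ n‖ ^ 2 := by
  have h0 : ‖ψ‖ = ‖e.repr ψ‖ := (e.repr.norm_map ψ).symm
  have h := lp.norm_rpow_eq_tsum (p := 2) (by norm_num) (e.repr ψ)
  simp only [ENNReal.toReal_ofNat] at h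
  rw [h0]
  rw [show ‖e.repr ψ‖ ^ 2 = ‖e.repr ψ‖ ^ (2:ℝ) by rw [← Real.rpow_natCast]; norm_num, h]
  congr 1; ext n; rw [← Real.rpow_natCast]; norm_num

/-- For all real `μ, λ` and every `δ ≥ 1/2`, the operator
`H_{μ,λ}(I + G)^{-δ}` extends to a bounded operator; equivalently, there is `C > 0` with
`‖H_{μ,λ} φ‖ ≤ C ‖(I + G)^δ φ‖` for all `φ` in the domain of `(I + G)^δ`.
Here `P = (I+G)^δ` is diagonal with entries `(1 + n(n-1)(n-2))^δ`. -/
theorem gribov_H_G_delta_bounded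
    {E : Type} [NormedAddCommGroup E] [InnerProductSpace ℂ E] [CompleteSpace E]
    (e : HilbertBasis ℕ ℂ E) (μ lam δ : ℝ) (hδ : 1 / 2 ≤ δ)
    (H P : E →ₗ.[ℂ] E)
    (hHdom : ∀ φ : E,
      φ ∈ H.domain ↔ Summable fun m : ℕ => ‖hCoef μ lam (fun n => e.repr φ n) m‖ ^ 2)
    (hHact : ∀ (φ : H.domain) (m : ℕ),
      e.repr (H φ) m = hCoef μ lam (fun n => e.repr (φ : E) n) m)
    (hPdom : ∀ φ : E,
      φ ∈ P.domain ↔ Summable fun n : ℕ => ((1 + gEig n) ^ δ) ^ 2 * ‖e.repr φ n‖ ^ 2)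
    (hPact : ∀ (φ : P.domain) (n : ℕ),
      e.repr (P φ) n = (((1 + gEig n) ^ δ : ℝ) : ℂ) * e.repr (φ : E) n) :
    ∃ C : ℝ, 0 < C ∧
      ∀ φ : P.domain, ∃ h : (φ : E) ∈ H.domain,
        ‖H ⟨(φ : E), h⟩‖ ≤ C * ‖P φ‖ := by
  classical
  set K : ℝ := 36 * (μ^2 + lam^2) + 1 with hKdef
  have hK : 0 < K := by positivity
  refine ⟨2 * Real.sqrt K, by positivity, ?_⟩
  intro φ
  set c : ℕ → ℂ := fun n => e.repr (φ : E) n with hc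
  set w : ℕ → ℝ := fun n => (1 + gEig n) ^ δ with hwdef
  set f : ℕ → ℝ := fun n => (w n)^2 * ‖c n‖^2 with hfdef
  have hg1 : ∀ n : ℕ, (1:ℝ) ≤ 1 + gEig n := fun n => by linarith [gribov_gEig_nonneg n]
  have hw0 : ∀ n, 0 ≤ w n := fun n => Real.rpow_nonneg (by linarith [hg1 n]) δ
  have hwsq : ∀ n, 1 + gEig n ≤ (w n)^2 := by
    intro n
    have hh : (1 + gEig n) ^ ((1:ℝ)/2) ≤ w n := Real.rpow_le_rpow_of_exponent_le (hg1 n) hδ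
    have h2 : ((1 + gEig n) ^ ((1:ℝ)/2))^2 = 1 + gEig n := by
      rw [← Real.rpow_natCast ((1+gEig n)^((1:ℝ)/2)) 2, ← Real.rpow_mul (by linarith [hg1 n])]
      norm_num
    calc 1 + gEig n = ((1 + gEig n) ^ ((1:ℝ)/2))^2 := h2.symm
      _ ≤ (w n)^2 := pow_le_pow_left₀ (Real.rpow_nonneg (by linarith [hg1 n]) _) hh 2
  have hf0 : ∀ n, 0 ≤ f n := fun n => by positivity
  have hfS : Summable f := (hPdom (φ:E)).1 φ.2
  -- pointwise bound
  have key : ∀ m, ‖hCoef μ lam c m‖^2 ≤ K * f m + K * f (m+1) + K * f (m-1) := by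
    intro m
    set a := |μ| * (m:ℝ) * ‖c m‖ with hadef
    set b := |lam| * ((m:ℝ) * Real.sqrt ((m:ℝ)+1)) * ‖c (m+1)‖ with hbdef
    set d := |lam| * (|(m:ℝ)-1| * Real.sqrt m) * ‖c (m-1)‖ with hddef
    have htri : ‖hCoef μ lam c m‖ ≤ a + b + d := by
      unfold hCoef
      have e1 : ‖(μ:ℂ) * (m:ℂ) * c m‖ = a := by
        rw [hadef]; simp [norm_mul]
      have e2 : ‖(m:ℂ) * (Real.sqrt ((m:ℕ) + 1) : ℂ) * c (m + 1)‖
          = (m:ℝ) * Real.sqrt ((m:ℝ)+1) * ‖c (m+1)‖ := by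
        rw [norm_mul, norm_mul]
        rw [Complex.norm_real, Real.norm_of_nonneg (Real.sqrt_nonneg _)]
        simp
      have e3 : ‖((m:ℂ) - 1) * (Real.sqrt m : ℂ) * c (m - 1)‖
          = |(m:ℝ)-1| * Real.sqrt m * ‖c (m-1)‖ := by
        rw [norm_mul, norm_mul]
        have h1 : ‖(m:ℂ) - 1‖ = |(m:ℝ)-1| := by
          rw [show (m:ℂ) - 1 = (((m:ℝ) - 1 : ℝ) : ℂ) by push_cast; ring, Complex.norm_real,
            Real.norm_eq_abs]
        have h2 : ‖((Real.sqrt (m:ℕ) : ℝ) : ℂ)‖ = Real.sqrt (m:ℝ) := by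
          rw [Complex.norm_real, Real.norm_of_nonneg (Real.sqrt_nonneg _)]
        rw [h1, h2]
      calc ‖(μ:ℂ) * (m:ℂ) * c m + Complex.I * (lam:ℂ) *
            ((m:ℂ) * (Real.sqrt ((m:ℕ)+1) : ℂ) * c (m + 1) +
              ((m:ℂ) - 1) * (Real.sqrt (m:ℕ) : ℂ) * c (m - 1))‖
          ≤ ‖(μ:ℂ) * (m:ℂ) * c m‖ + ‖Complex.I * (lam:ℂ)‖ *
              (‖(m:ℂ) * (Real.sqrt ((m:ℕ)+1) : ℂ) * c (m + 1)‖ +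
               ‖((m:ℂ) - 1) * (Real.sqrt (m:ℕ) : ℂ) * c (m - 1)‖) := by
            refine le_trans (norm_add_le _ _) (add_le_add le_rfl ?_)
            rw [norm_mul]
            exact mul_le_mul_of_nonneg_left (norm_add_le _ _) (norm_nonneg _)
        _ = a + b + d := by
            rw [e1, e2, e3]
            simp [norm_mul, hbdef, hddef]
            ring
    have ha : 0 ≤ a := by rw [hadef]; positivity
    have hb : 0 ≤ b := by
      rw [hbdef]
      have := Real.sqrt_nonneg ((m:ℝ)+1); positivity
    have hd : 0 ≤ d := by
      rw [hddef]
      have := Real.sqrt_nonneg (m:ℝ); positivity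
    have hsq : ‖hCoef μ lam c m‖^2 ≤ 3*a^2 + 3*b^2 + 3*d^2 := by
      nlinarith [norm_nonneg (hCoef μ lam c m), sq_nonneg (a-b), sq_nonneg (b-d), sq_nonneg (a-d), htri]
    have hA : 3*a^2 ≤ K * f m := by
      have h1 : a^2 = μ^2 * ((m:ℝ)^2 * ‖c m‖^2) := by rw [hadef]; rw [mul_pow, mul_pow, sq_abs]; ring
      have h2 : (m:ℝ)^2 ≤ 4 * (w m)^2 := le_trans (gribov_nat1 m) (by linarith [hwsq m])
      have h3 : 3 * (μ^2 * (m:ℝ)^2) ≤ K * (w m)^2 := by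
        nlinarith [mul_le_mul_of_nonneg_left h2 (sq_nonneg μ),
          mul_nonneg (show (0:ℝ) ≤ K - 12*μ^2 by rw [hKdef]; nlinarith [sq_nonneg lam]) (sq_nonneg (w m))]
      calc 3*a^2 = (3*(μ^2*(m:ℝ)^2)) * ‖c m‖^2 := by rw [h1]; ring
        _ ≤ (K * (w m)^2) * ‖c m‖^2 := mul_le_mul_of_nonneg_right h3 (sq_nonneg _)
        _ = K * f m := by rw [hfdef]; ring
    have hB : 3*b^2 ≤ K * f (m+1) := by
      have hs : Real.sqrt ((m:ℝ)+1) ^ 2 = (m:ℝ)+1 := Real.sq_sqrt (by positivity)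
      have h1 : b^2 = lam^2 * (((m:ℝ)^2*((m:ℝ)+1)) * ‖c (m+1)‖^2) := by
        rw [hbdef]; rw [mul_pow, mul_pow, mul_pow, sq_abs, hs]; ring
      have h2 : (m:ℝ)^2*((m:ℝ)+1) ≤ 2 * (w (m+1))^2 := le_trans (gribov_nat2 m) (by linarith [hwsq (m+1)])
      have h3 : 3 * (lam^2 * ((m:ℝ)^2*((m:ℝ)+1))) ≤ K * (w (m+1))^2 := by
        nlinarith [mul_le_mul_of_nonneg_left h2 (sq_nonneg lam),
          mul_nonneg (show (0:ℝ) ≤ K - 6*lam^2 by rw [hKdef]; nlinarith [sq_nonneg μ, sq_nonneg lam]) (sq_nonneg (w (m+1)))]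
      calc 3*b^2 = (3*(lam^2*((m:ℝ)^2*((m:ℝ)+1)))) * ‖c (m+1)‖^2 := by rw [h1]; ring
        _ ≤ (K * (w (m+1))^2) * ‖c (m+1)‖^2 := mul_le_mul_of_nonneg_right h3 (sq_nonneg _)
        _ = K * f (m+1) := by rw [hfdef]; ring
    have hD : 3*d^2 ≤ K * f (m-1) := by
      have hs : Real.sqrt (m:ℝ) ^ 2 = (m:ℝ) := Real.sq_sqrt (by positivity)
      have h1 : d^2 = lam^2 * ((((m:ℝ)-1)^2*(m:ℝ)) * ‖c (m-1)‖^2) := by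
        rw [hddef]; rw [mul_pow, mul_pow, mul_pow, sq_abs, sq_abs, hs]; ring
      have h2 : ((m:ℝ)-1)^2*(m:ℝ) ≤ 12 * (w (m-1))^2 := le_trans (gribov_nat3 m) (by linarith [hwsq (m-1)])
      have h3 : 3 * (lam^2 * (((m:ℝ)-1)^2*(m:ℝ))) ≤ K * (w (m-1))^2 := by
        nlinarith [mul_le_mul_of_nonneg_left h2 (sq_nonneg lam),
          mul_nonneg (show (0:ℝ) ≤ K - 36*lam^2 by rw [hKdef]; nlinarith [sq_nonneg μ, sq_nonneg lam]) (sq_nonneg (w (m-1)))]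
      calc 3*d^2 = (3*(lam^2*(((m:ℝ)-1)^2*(m:ℝ)))) * ‖c (m-1)‖^2 := by rw [h1]; ring
        _ ≤ (K * (w (m-1))^2) * ‖c (m-1)‖^2 := mul_le_mul_of_nonneg_right h3 (sq_nonneg _)
        _ = K * f (m-1) := by rw [hfdef]; ring
    linarith
  -- summability
  have hfS1 : Summable (fun m => f (m+1)) := (summable_nat_add_iff 1).2 hfS
  have hfSm : Summable (fun m => f (m-1)) := by
    rw [← summable_nat_add_iff 1]
    simpa using hfS
  have hbound : Summable (fun m => K * f m + K * f (m+1) + K * f (m-1)) :=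
    ((hfS.mul_left K).add (hfS1.mul_left K)).add (hfSm.mul_left K)
  have hHsum : Summable fun m => ‖hCoef μ lam c m‖^2 :=
    Summable.of_nonneg_of_le (fun m => by positivity) key hbound
  have hmem : (φ:E) ∈ H.domain := (hHdom (φ:E)).2 (by simpa [← hc] using hHsum)
  refine ⟨hmem, ?_⟩
  have hH2 : ‖H ⟨(φ:E), hmem⟩‖^2 = ∑' m, ‖hCoef μ lam c m‖^2 := by
    rw [gribov_norm_sq_eq_tsum e]
    congr 1; funext m
    rw [hHact ⟨(φ:E), hmem⟩ m]
  have hP2 : ‖P φ‖^2 = ∑' n, f n := by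
    rw [gribov_norm_sq_eq_tsum e]
    congr 1; funext n
    rw [hPact φ n, norm_mul, Complex.norm_real,
      Real.norm_of_nonneg (show (0:ℝ) ≤ (1 + gEig n) ^ δ from
        Real.rpow_nonneg (by linarith [hg1 n]) δ), mul_pow]
  have hS0 : 0 ≤ ∑' m, f m := tsum_nonneg hf0
  have hT1 : ∑' m, f (m+1) ≤ ∑' m, f m := by
    have h := Summable.tsum_eq_zero_add hfS
    linarith [hf0 0]
  have hT2 : ∑' m, f (m-1) ≤ 2 * ∑' m, f m := by
    have h := Summable.tsum_eq_zero_add hfSm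
    simp only [Nat.add_sub_cancel, Nat.zero_sub] at h
    have h0 : f 0 ≤ ∑' m, f m := Summable.le_tsum hfS 0 (fun j _ => hf0 j)
    linarith
  have hfinal : ‖H ⟨(φ:E), hmem⟩‖^2 ≤ (2*Real.sqrt K * ‖P φ‖)^2 := by
    have hsum_le : ∑' m, ‖hCoef μ lam c m‖^2 ≤ ∑' m, (K*f m + K*f (m+1) + K*f (m-1)) :=
      Summable.tsum_le_tsum key hHsum hbound
    have hsplit : ∑' m, (K*f m + K*f (m+1) + K*f (m-1))
        = K * (∑' m, f m) + K * (∑' m, f (m+1)) + K * (∑' m, f (m-1)) := by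
      rw [Summable.tsum_add ((hfS.mul_left K).add (hfS1.mul_left K)) (hfSm.mul_left K),
        Summable.tsum_add (hfS.mul_left K) (hfS1.mul_left K), tsum_mul_left, tsum_mul_left, tsum_mul_left]
    have hKsq : (2*Real.sqrt K * ‖P φ‖)^2 = 4*K*‖P φ‖^2 := by
      rw [mul_pow, mul_pow, Real.sq_sqrt hK.le]; ring
    rw [hH2, hKsq, hP2]
    nlinarith [mul_le_mul_of_nonneg_left hT1 hK.le, mul_le_mul_of_nonneg_left hT2 hK.le]
  have := Real.sqrt_le_sqrt hfinal
  rwa [Real.sqrt_sq (norm_nonneg _), Real.sqrt_sq (by positivity)] at this
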